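/- arXiv:2010.13104 — 2 statements merged into one kernel-verified Lean document; each statement's English description precedes it below -/
import Mathlib

section
/- For Q ∈ ℝ^{n×n} symmetric positive semidefinite, the KKT system [[Q, 𝟙],[𝟙ᵀ, 0]] [c; λ] = [0; 1] always has at least one solution (c, λ). -/
/-!
If some `v ∈ ker Q` has `𝟙 ⬝ᵥ v ≠ 0`, rescaling it gives a solution with `λ = 0`. Otherwise
`𝟙 ⊥ ker Q = ker Qᵀ`, so `𝟙 ∈ range Q = (ker Qᵀ)ᗮ`, say `𝟙 = Q u`. Then `𝟙 ⬝ᵥ u = uᵀ Q u`,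
which cannot vanish: for positive semidefinite `Q` that would force `Q u = 0`. Take
`c = u / (𝟙 ⬝ᵥ u)` and `λ = -1 / (𝟙 ⬝ᵥ u)`.
-/

open Matrix

theorem Matrix.exists_mulVec_eq_of_forall_transpose_mulVec_eq_zero {m n : Type*} [Fintype m]
    [Fintype n] (A : Matrix m n ℝ) (b : m → ℝ) (hb : ∀ v, Aᵀ *ᵥ v = 0 → b ⬝ᵥ v = 0) :
    ∃ u, A *ᵥ u = b := by
  classical
  have hrange : LinearMap.range (toEuclideanLin A) = (LinearMap.ker (toEuclideanLin Aᵀ))ᗮ := by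
    rw [← conjTranspose_eq_transpose_of_trivial, toEuclideanLin_conjTranspose_eq_adjoint,
      LinearMap.orthogonal_ker, LinearMap.adjoint_adjoint]
  have hmem : WithLp.toLp 2 b ∈ LinearMap.range (toEuclideanLin A) :=
    hrange ▸ fun v hv ↦ hb v.ofLp (congrArg WithLp.ofLp hv)
  obtain ⟨u, hu⟩ := hmem
  exact ⟨u.ofLp, congrArg WithLp.ofLp hu⟩

theorem Matrix.PosSemidef.dotProduct_ne_zero_of_mulVec_eq {n : Type*} [Fintype n]
    {Q : Matrix n n ℝ} (hQ : Q.PosSemidef) {a u : n → ℝ} (hu : Q *ᵥ u = a) (ha : a ≠ 0) :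
    a ⬝ᵥ u ≠ 0 := by
  intro hau
  have hquad : star u ⬝ᵥ Q *ᵥ u = 0 := by
    rwa [star_trivial, hu, dotProduct_comm]
  exact ha (hu ▸ (hQ.dotProduct_mulVec_zero_iff u).mp hquad)

theorem Matrix.PosSemidef.exists_kkt_solution {n : Type*} [Fintype n] {Q : Matrix n n ℝ}
    (hQ : Q.PosSemidef) {a : n → ℝ} (ha : a ≠ 0) :
    ∃ (c : n → ℝ) (lam : ℝ), Q *ᵥ c + lam • a = 0 ∧ a ⬝ᵥ c = 1 := by
  by_cases hker : ∃ v, Q *ᵥ v = 0 ∧ a ⬝ᵥ v ≠ 0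
  · obtain ⟨v, hv, hav⟩ := hker
    refine ⟨(a ⬝ᵥ v)⁻¹ • v, 0, ?_, ?_⟩
    · simp [mulVec_smul, hv]
    · rw [dotProduct_smul, smul_eq_mul, inv_mul_cancel₀ hav]
  · push Not at hker
    obtain ⟨u, hu⟩ := Q.exists_mulVec_eq_of_forall_transpose_mulVec_eq_zero a
      (hQ.isHermitian.transpose ▸ hker)
    have hau := hQ.dotProduct_ne_zero_of_mulVec_eq hu ha
    refine ⟨(a ⬝ᵥ u)⁻¹ • u, -(a ⬝ᵥ u)⁻¹, ?_, ?_⟩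
    · rw [mulVec_smul, hu, neg_smul, add_neg_cancel]
    · rw [dotProduct_smul, smul_eq_mul, inv_mul_cancel₀ hau]

theorem kkt_system_solvable (n : ℕ) (hn : 0 < n) (Q : Matrix (Fin n) (Fin n) ℝ)
    (hQsymm : Qᵀ = Q) (hQpsd : ∀ x : Fin n → ℝ, 0 ≤ x ⬝ᵥ Q *ᵥ x) :
    ∃ (c : Fin n → ℝ) (lam : ℝ),
      Q *ᵥ c + lam • (fun _ => (1:ℝ)) = 0 ∧ (fun _ => (1:ℝ)) ⬝ᵥ c = 1 := by
  have hQ : Q.PosSemidef :=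
    .of_dotProduct_mulVec_nonneg (by rwa [IsHermitian, conjTranspose_eq_transpose_of_trivial])
      fun x ↦ by simpa using hQpsd x
  have hone : (fun _ => (1:ℝ)) ≠ (0 : Fin n → ℝ) :=
    fun h ↦ one_ne_zero (congrFun h ⟨0, hn⟩)
  exact hQ.exists_kkt_solution hone
end

section
/- Let θₖ > 0 for k = 1,…,N and suppose the neighborhood structure is symmetric (ℓ ∈ 𝒩ₖ ⟺ k ∈ 𝒩_ℓ) with k ∈ 𝒩ₖ. Define A by a_{ℓk} = θ_ℓ / ∑_{m∈𝒩ₖ} θ_m if ℓ ∈ 𝒩ₖ and 0 otherwise, and define p ∈ ℝ^N by pₖ = θₖ ∑_{m∈𝒩ₖ} θ_m / ∑_{ℓ=1}^N (θ_ℓ ∑_{m∈𝒩_ℓ} θ_m). Then Ap = p, pₖ > 0 for all k, and 𝟙ᵀp = 1; i.e., p is a Perron eigenvector of A. -/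
open Matrix Finset

/-!
`A` is column-stochastic, and with `qₖ = θₖ ∑_{m ∈ 𝒩ₖ} θ_m` one has `a_{ℓk} qₖ = θ_ℓ θₖ [ℓ ∈ 𝒩ₖ]`,
which is symmetric in `ℓ, k` by the symmetry of the neighbourhoods. A column-stochastic matrix
satisfying detailed balance with respect to a vector fixes it, and `p` is `q` normalised.
-/

theorem Matrix.mulVec_eq_self_of_detailed_balance {ι R : Type*} [Fintype ι] [CommSemiring R]
    {A : Matrix ι ι R} {p : ι → R} (hcol : ∀ k, ∑ l, A l k = 1)
    (hbal : ∀ k l, A l k * p k = A k l * p l) : A *ᵥ p = p := by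
  funext l
  calc (A *ᵥ p) l = ∑ k, A k l * p l := sum_congr rfl fun k _ => hbal k l
    _ = p l := by rw [← sum_mul, hcol, one_mul]

section RelativeVariance

variable {ι : Type*} [DecidableEq ι] (𝒩 : ι → Finset ι) (θ : ι → ℝ)

noncomputable def relativeVarianceMatrix : Matrix ι ι ℝ :=
  fun l k => if l ∈ 𝒩 k then θ l / ∑ m ∈ 𝒩 k, θ m else 0

variable {𝒩 θ}

theorem sum_relativeVarianceMatrix_col [Fintype ι] {k : ι} (hk : ∑ m ∈ 𝒩 k, θ m ≠ 0) :
    ∑ l, relativeVarianceMatrix 𝒩 θ l k = 1 := by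
  simp only [relativeVarianceMatrix]
  rw [sum_ite_mem, univ_inter, ← sum_div, div_self hk]

theorem relativeVarianceMatrix_mul_weight {l k : ι} (hk : ∑ m ∈ 𝒩 k, θ m ≠ 0) :
    relativeVarianceMatrix 𝒩 θ l k * (θ k * ∑ m ∈ 𝒩 k, θ m) =
      if l ∈ 𝒩 k then θ l * θ k else 0 := by
  simp only [relativeVarianceMatrix]
  split_ifs
  · field_simp
  · exact zero_mul _

theorem relativeVarianceMatrix_detailed_balance (hsymm : ∀ k l, l ∈ 𝒩 k ↔ k ∈ 𝒩 l)
    (hs : ∀ k, ∑ m ∈ 𝒩 k, θ m ≠ 0) (c : ℝ) (k l : ι) :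
    relativeVarianceMatrix 𝒩 θ l k * (θ k * (∑ m ∈ 𝒩 k, θ m) / c) =
      relativeVarianceMatrix 𝒩 θ k l * (θ l * (∑ m ∈ 𝒩 l, θ m) / c) := by
  rw [mul_div_assoc', mul_div_assoc', relativeVarianceMatrix_mul_weight (hs k),
    relativeVarianceMatrix_mul_weight (hs l), mul_comm (θ l)]
  simp only [hsymm k l]

end RelativeVariance

theorem perron_eigenvector_relative_variance (N : ℕ) (hN : 0 < N)
    (𝒩 : Fin N → Finset (Fin N)) (hself : ∀ k, k ∈ 𝒩 k)
    (hsymm : ∀ k l, l ∈ 𝒩 k ↔ k ∈ 𝒩 l)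
    (θ : Fin N → ℝ) (hθ : ∀ k, 0 < θ k) :
    let A : Matrix (Fin N) (Fin N) ℝ :=
      fun l k => if l ∈ 𝒩 k then θ l / (∑ m ∈ 𝒩 k, θ m) else 0
    let p : Fin N → ℝ :=
      fun k => θ k * (∑ m ∈ 𝒩 k, θ m) / (∑ l, θ l * ∑ m ∈ 𝒩 l, θ m)
    A *ᵥ p = p ∧ (∀ k, 0 < p k) ∧ ∑ k, p k = 1 := by
  intro A p
  have hs : ∀ k, 0 < ∑ m ∈ 𝒩 k, θ m := fun k => sum_pos (fun m _ => hθ m) ⟨k, hself k⟩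
  have hZ : 0 < ∑ l, θ l * ∑ m ∈ 𝒩 l, θ m :=
    sum_pos (fun l _ => mul_pos (hθ l) (hs l)) ⟨⟨0, hN⟩, mem_univ _⟩
  refine ⟨?_, fun k => div_pos (mul_pos (hθ k) (hs k)) hZ, ?_⟩
  · exact mulVec_eq_self_of_detailed_balance (fun k => sum_relativeVarianceMatrix_col (hs k).ne')
      (relativeVarianceMatrix_detailed_balance hsymm (fun k => (hs k).ne') _)
  · rw [← sum_div, div_self hZ.ne']
end
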